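/- Let C be a pointed, spanning polyhedral cone in E = ℝⁿ, let τ be a face of C, and let π : E → E/span_ℝ τ be the quotient map. Then: (i) the image cone π(C) is pointed, i.e., π(C) ∩ (−π(C)) = {0}; and (ii) the assignment σ ↦ π(σ) is a bijection from the set of faces of C containing τ onto the set of faces of π(C) (faces of π(C) defined by the same condition: subsets of π(C) containing 0, closed under addition, such that x, y ∈ π(C) with x + y in the subset forces x and y in the subset), and this bijection is an order isomorphism for inclusion: σ ⊆ σ' iff π(σ) ⊆ π(σ'). -/

import Mathlib

open Pointwise

/-- A polyhedral cone in `ℝⁿ`: an intersection of finitely many closed linear half-spaces. -/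
def IsPolyCone {n : ℕ} (C : Set (Fin n → ℝ)) : Prop :=
  ∃ (m : ℕ) (ℓ : Fin m → ((Fin n → ℝ) →ₗ[ℝ] ℝ)), C = {x | ∀ i, 0 ≤ ℓ i x}

/-- A face of a cone `C`: a subset of `C` containing `0`, closed under addition, and such
that whenever `x, y ∈ C` and `x + y` lies in the subset, both `x` and `y` do. -/
def IsConeFace {M : Type*} [AddCommMonoid M] (σ C : Set M) : Prop :=
  σ ⊆ C ∧ (0 : M) ∈ σ ∧ (∀ x ∈ σ, ∀ y ∈ σ, x + y ∈ σ) ∧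
    ∀ x ∈ C, ∀ y ∈ C, x + y ∈ σ → x ∈ σ ∧ y ∈ σ

/-- A downset for the partial order `x ≼ y ↔ y - x ∈ C`. -/
def IsDownset {n : ℕ} (C D : Set (Fin n → ℝ)) : Prop :=
  ∀ x y : Fin n → ℝ, y ∈ D → y - x ∈ C → x ∈ D

/-- The upper boundary downset `D^σ = {a | a - σ° ⊆ D}`. -/
def upSet {n : ℕ} (D σ : Set (Fin n → ℝ)) : Set (Fin n → ℝ) :=
  {a | ∀ s ∈ intrinsicInterior ℝ σ, a - s ∈ D}

/-- `a` is a cogenerator of the downset `D` along the face `τ` with nadir `σ`: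
`(a + C) ∩ D^σ = a + τ` and no face `σ''` with `τ ⊆ σ'' ⊊ σ` satisfies `a - σ''° ⊆ D`. -/
def IsCogen {n : ℕ} (C D τ σ : Set (Fin n → ℝ)) (a : Fin n → ℝ) : Prop :=
  (({a} + C) ∩ upSet D σ = {a} + τ) ∧
  ∀ σ'' : Set (Fin n → ℝ), IsConeFace σ'' C → τ ⊆ σ'' → σ'' ⊂ σ →
    ¬ (∀ s ∈ intrinsicInterior ℝ σ'', a - s ∈ D)

/-- A `σ`-vicinity of a point `p` of `E ⧸ span τ`: the image under the quotient map of
`u + σ° + C` for some `u` admitting a representative `w` of `p` with `w - u ∈ σ°`. -/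
def IsVic {n : ℕ} (C σ τ : Set (Fin n → ℝ))
    (p : (Fin n → ℝ) ⧸ Submodule.span ℝ τ)
    (V : Set ((Fin n → ℝ) ⧸ Submodule.span ℝ τ)) : Prop :=
  ∃ u w : Fin n → ℝ, (Submodule.span ℝ τ).mkQ w = p ∧
    w - u ∈ intrinsicInterior ℝ σ ∧
    V = (Submodule.span ℝ τ).mkQ '' ({u} + intrinsicInterior ℝ σ + C)

/-!
Faces are only assumed closed under addition, but the Archimedean property makes a face `τ`
closed under nonnegative scalars (`r • x + (⌈r⌉₊ - r) • x = ⌈r⌉₊ • x`), so `span τ = τ - τ`.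
Hence if `x ∈ C` is congruent modulo `span τ` to some `z` in a face `σ ⊇ τ`, then
`x + s = z + t` with `s, t ∈ τ ⊆ σ`, and the face property puts `x` in `σ`; that is,
`σ = C ∩ π⁻¹(π σ)`. This gives order reflection (hence injectivity) of `σ ↦ π σ`, the face
property of `π σ`, and, for `σ = τ`, pointedness of `π C`. Conversely a face `Φ` of `π C` pulls
back to the face `C ∩ π⁻¹ Φ ⊇ τ`, whose image is `Φ`.
-/

section Faces

variable {𝕜 E F : Type*} [Ring 𝕜] [LinearOrder 𝕜] [IsStrictOrderedRing 𝕜]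
  [AddCommGroup E] [Module 𝕜 E] [AddCommGroup F] [Module 𝕜 F]
  {K : PointedCone 𝕜 E} {τ σ σ' : Set E}

theorem IsConeFace.nsmul_mem {M : Type*} [AddCommMonoid M] {τ C : Set M}
    (hτ : IsConeFace τ C) (k : ℕ) {x : M} (hx : x ∈ τ) : k • x ∈ τ :=
  _root_.nsmul_mem (S := AddSubmonoid.mk ⟨τ, fun hx hy ↦ hτ.2.2.1 _ hx _ hy⟩ hτ.2.1) hx k

theorem IsConeFace.smul_mem [FloorSemiring 𝕜] (hτ : IsConeFace τ K) {r : 𝕜} (hr : 0 ≤ r)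
    {x : E} (hx : x ∈ τ) : r • x ∈ τ := by
  have hk : (⌈r⌉₊ : 𝕜) • x ∈ τ := by
    rw [Nat.cast_smul_eq_nsmul]; exact hτ.nsmul_mem _ hx
  have hsum : r • x + ((⌈r⌉₊ : 𝕜) - r) • x = (⌈r⌉₊ : 𝕜) • x := by rw [← add_smul]; abel_nf
  rw [← hsum] at hk
  exact (hτ.2.2.2 _ (K.smul_mem hr (hτ.1 hx)) _
    (K.smul_mem (sub_nonneg.2 (Nat.le_ceil r)) (hτ.1 hx)) hk).1

theorem IsConeFace.exists_sub_eq_of_mem_span [FloorSemiring 𝕜] (hτ : IsConeFace τ K) {v : E}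
    (hv : v ∈ Submodule.span 𝕜 τ) : ∃ s ∈ τ, ∃ t ∈ τ, s - t = v := by
  induction hv using Submodule.span_induction with
  | mem x hx => exact ⟨x, hx, 0, hτ.2.1, sub_zero x⟩
  | zero => exact ⟨0, hτ.2.1, 0, hτ.2.1, sub_zero 0⟩
  | add x y _ _ ihx ihy =>
    obtain ⟨s, hs, t, ht, rfl⟩ := ihx
    obtain ⟨s', hs', t', ht', rfl⟩ := ihy
    exact ⟨s + s', hτ.2.2.1 _ hs _ hs', t + t', hτ.2.2.1 _ ht _ ht', by abel⟩
  | smul r x _ ih =>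
    obtain ⟨s, hs, t, ht, rfl⟩ := ih
    rcases le_total 0 r with hr | hr
    · exact ⟨r • s, hτ.smul_mem hr hs, r • t, hτ.smul_mem hr ht, (smul_sub r s t).symm⟩
    · refine ⟨(-r) • t, hτ.smul_mem (neg_nonneg.2 hr) ht,
        (-r) • s, hτ.smul_mem (neg_nonneg.2 hr) hs, ?_⟩
      rw [smul_sub, neg_smul, neg_smul]; abel

theorem IsConeFace.inter_preimage_image_mkQ [FloorSemiring 𝕜] (hτ : IsConeFace τ K)
    (hσ : IsConeFace σ K) (hτσ : τ ⊆ σ) :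
    (K : Set E) ∩ (Submodule.span 𝕜 τ).mkQ ⁻¹' ((Submodule.span 𝕜 τ).mkQ '' σ) = σ := by
  refine Set.Subset.antisymm ?_ fun x hx ↦ ⟨hσ.1 hx, x, hx, rfl⟩
  rintro x ⟨hxK, z, hz, hzx⟩
  rw [Submodule.mkQ_apply, Submodule.mkQ_apply, Submodule.Quotient.eq] at hzx
  obtain ⟨s, hs, t, ht, hst⟩ := hτ.exists_sub_eq_of_mem_span hzx
  have hxs : x + s ∈ σ := by
    rw [add_comm, sub_eq_sub_iff_add_eq_add.mp hst]
    exact hσ.2.2.1 _ hz _ (hτσ ht)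
  exact (hσ.2.2.2 _ hxK _ (hτ.1 hs) hxs).1

theorem IsConeFace.mem_of_mkQ_mem_image [FloorSemiring 𝕜] (hτ : IsConeFace τ K)
    (hσ : IsConeFace σ K) (hτσ : τ ⊆ σ) {x : E} (hx : x ∈ K)
    (h : (Submodule.span 𝕜 τ).mkQ x ∈ (Submodule.span 𝕜 τ).mkQ '' σ) : x ∈ σ :=
  hτ.inter_preimage_image_mkQ hσ hτσ ▸ ⟨hx, h⟩

theorem IsConeFace.image_mkQ_subset_image_mkQ_iff [FloorSemiring 𝕜] (hτ : IsConeFace τ K)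
    (hσ : IsConeFace σ K) (hσ' : IsConeFace σ' K) (hτσ' : τ ⊆ σ') :
    (Submodule.span 𝕜 τ).mkQ '' σ ⊆ (Submodule.span 𝕜 τ).mkQ '' σ' ↔ σ ⊆ σ' :=
  ⟨fun h x hx ↦ hτ.mem_of_mkQ_mem_image hσ' hτσ' (hσ.1 hx) (h ⟨x, hx, rfl⟩), Set.image_mono⟩

theorem IsConeFace.image_mkQ_inter_neg [FloorSemiring 𝕜] (hτ : IsConeFace τ K) :
    (Submodule.span 𝕜 τ).mkQ '' K ∩ -((Submodule.span 𝕜 τ).mkQ '' K) = {0} := by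
  refine Set.eq_singleton_iff_unique_mem.2 ⟨⟨⟨0, K.zero_mem, map_zero _⟩, ?_⟩, ?_⟩
  · exact Set.mem_neg.2 (by rw [neg_zero]; exact ⟨0, K.zero_mem, map_zero _⟩)
  rintro _ ⟨⟨x, hx, rfl⟩, y, hy, hyx⟩
  have hxy : x + y ∈ τ := by
    refine hτ.mem_of_mkQ_mem_image hτ subset_rfl (K.add_mem hx hy) ⟨0, hτ.2.1, ?_⟩
    rw [map_add, hyx, map_zero, add_neg_cancel]
  exact (Submodule.Quotient.mk_eq_zero _).2 (Submodule.subset_span (hτ.2.2.2 _ hx _ hy hxy).1)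

theorem IsConeFace.image_mkQ [FloorSemiring 𝕜] (hτ : IsConeFace τ K) (hσ : IsConeFace σ K)
    (hτσ : τ ⊆ σ) :
    IsConeFace ((Submodule.span 𝕜 τ).mkQ '' σ) ((Submodule.span 𝕜 τ).mkQ '' K) := by
  refine ⟨Set.image_mono hσ.1, ⟨0, hσ.2.1, map_zero _⟩, ?_, ?_⟩
  · rintro _ ⟨x, hx, rfl⟩ _ ⟨y, hy, rfl⟩
    exact ⟨x + y, hσ.2.2.1 _ hx _ hy, map_add _ _ _⟩
  · rintro _ ⟨x, hx, rfl⟩ _ ⟨y, hy, rfl⟩ hxy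
    rw [← map_add] at hxy
    have := hσ.2.2.2 _ hx _ hy (hτ.mem_of_mkQ_mem_image hσ hτσ (K.add_mem hx hy) hxy)
    exact ⟨⟨x, this.1, rfl⟩, ⟨y, this.2, rfl⟩⟩

theorem IsConeFace.inter_preimage {f : E →ₗ[𝕜] F} {Φ : Set F} (hΦ : IsConeFace Φ (f '' K)) :
    IsConeFace ((K : Set E) ∩ f ⁻¹' Φ) K := by
  refine ⟨Set.inter_subset_left, ⟨K.zero_mem, ?_⟩, ?_, ?_⟩
  · simpa using hΦ.2.1
  · rintro x ⟨hxK, hxΦ⟩ y ⟨hyK, hyΦ⟩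
    exact ⟨K.add_mem hxK hyK, by simpa using hΦ.2.2.1 _ hxΦ _ hyΦ⟩
  · rintro x hxK y hyK ⟨-, hxyΦ⟩
    rw [Set.mem_preimage, map_add] at hxyΦ
    have := hΦ.2.2.2 _ ⟨x, hxK, rfl⟩ _ ⟨y, hyK, rfl⟩ hxyΦ
    exact ⟨⟨hxK, this.1⟩, ⟨hyK, this.2⟩⟩

theorem IsConeFace.subset_inter_preimage_mkQ (hτ : IsConeFace τ K)
    {Φ : Set (E ⧸ Submodule.span 𝕜 τ)} (hΦ : (0 : E ⧸ Submodule.span 𝕜 τ) ∈ Φ) :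
    τ ⊆ (K : Set E) ∩ (Submodule.span 𝕜 τ).mkQ ⁻¹' Φ := fun t ht ↦
  ⟨hτ.1 ht, by simpa [(Submodule.Quotient.mk_eq_zero _).2 (Submodule.subset_span ht)] using hΦ⟩

end Faces

theorem IsPolyCone.exists_pointedCone {n : ℕ} {C : Set (Fin n → ℝ)} (hC : IsPolyCone C) :
    ∃ K : PointedCone ℝ (Fin n → ℝ), (K : Set (Fin n → ℝ)) = C := by
  obtain ⟨m, ℓ, rfl⟩ := hC
  exact ⟨⨅ i, (PointedCone.positive ℝ ℝ).comap (ℓ i), by ext; simp⟩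

theorem quotient_cone_faces_general {n : ℕ} (C τ : Set (Fin n → ℝ))
    (hC : IsPolyCone C) (hτ : IsConeFace τ C) :
    ((Submodule.span ℝ τ).mkQ '' C ∩ (-((Submodule.span ℝ τ).mkQ '' C)) = {0}) ∧
    (∀ σ : Set (Fin n → ℝ), IsConeFace σ C → τ ⊆ σ →
      IsConeFace ((Submodule.span ℝ τ).mkQ '' σ) ((Submodule.span ℝ τ).mkQ '' C)) ∧
    (∀ σ σ' : Set (Fin n → ℝ), IsConeFace σ C → τ ⊆ σ → IsConeFace σ' C → τ ⊆ σ' →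
      (Submodule.span ℝ τ).mkQ '' σ = (Submodule.span ℝ τ).mkQ '' σ' → σ = σ') ∧
    (∀ F : Set ((Fin n → ℝ) ⧸ Submodule.span ℝ τ),
      IsConeFace F ((Submodule.span ℝ τ).mkQ '' C) →
        ∃ σ : Set (Fin n → ℝ), IsConeFace σ C ∧ τ ⊆ σ ∧
          (Submodule.span ℝ τ).mkQ '' σ = F) ∧
    (∀ σ σ' : Set (Fin n → ℝ), IsConeFace σ C → τ ⊆ σ → IsConeFace σ' C → τ ⊆ σ' →
      (σ ⊆ σ' ↔ (Submodule.span ℝ τ).mkQ '' σ ⊆ (Submodule.span ℝ τ).mkQ '' σ')) := by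
  obtain ⟨K, rfl⟩ := hC.exists_pointedCone
  refine ⟨hτ.image_mkQ_inter_neg, fun σ hσ hτσ ↦ hτ.image_mkQ hσ hτσ, ?_, ?_, ?_⟩
  · intro σ σ' hσ hτσ hσ' hτσ' h
    exact ((hτ.image_mkQ_subset_image_mkQ_iff hσ hσ' hτσ').1 h.le).antisymm
      ((hτ.image_mkQ_subset_image_mkQ_iff hσ' hσ hτσ).1 h.ge)
  · intro Φ hΦ
    refine ⟨_, hΦ.inter_preimage, hτ.subset_inter_preimage_mkQ hΦ.2.1, ?_⟩
    rw [Set.image_inter_preimage, Set.inter_eq_right.2 hΦ.1]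
  · intro σ σ' hσ _ hσ' hτσ'
    exact (hτ.image_mkQ_subset_image_mkQ_iff hσ hσ' hτσ').symm

/-- The image of `C` in `E ⧸ span τ` is a pointed cone, and
`σ ↦ π(σ)` is an inclusion-preserving bijection from the faces of `C` containing `τ`
onto the faces of `π(C)`. -/
theorem quotient_cone_faces {n : ℕ} (C τ : Set (Fin n → ℝ))
    (hC : IsPolyCone C) (hpointed : C ∩ (-C) = {0}) (hspan : C - C = Set.univ)
    (hτ : IsConeFace τ C) :
    ((Submodule.span ℝ τ).mkQ '' C ∩ (-((Submodule.span ℝ τ).mkQ '' C)) = {0}) ∧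
    (∀ σ : Set (Fin n → ℝ), IsConeFace σ C → τ ⊆ σ →
      IsConeFace ((Submodule.span ℝ τ).mkQ '' σ) ((Submodule.span ℝ τ).mkQ '' C)) ∧
    (∀ σ σ' : Set (Fin n → ℝ), IsConeFace σ C → τ ⊆ σ → IsConeFace σ' C → τ ⊆ σ' →
      (Submodule.span ℝ τ).mkQ '' σ = (Submodule.span ℝ τ).mkQ '' σ' → σ = σ') ∧
    (∀ F : Set ((Fin n → ℝ) ⧸ Submodule.span ℝ τ),
      IsConeFace F ((Submodule.span ℝ τ).mkQ '' C) →
        ∃ σ : Set (Fin n → ℝ), IsConeFace σ C ∧ τ ⊆ σ ∧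
          (Submodule.span ℝ τ).mkQ '' σ = F) ∧
    (∀ σ σ' : Set (Fin n → ℝ), IsConeFace σ C → τ ⊆ σ → IsConeFace σ' C → τ ⊆ σ' →
      (σ ⊆ σ' ↔ (Submodule.span ℝ τ).mkQ '' σ ⊆ (Submodule.span ℝ τ).mkQ '' σ')) :=
  quotient_cone_faces_general C τ hC hτ
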